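/- arXiv:2603.15565 — 2 statements merged into one kernel-verified Lean document; each statement's English description precedes it below -/
import Mathlib

section
/- Let (A,B) be a depth-2 linear circuit over ℚ for D^{⊗n} with left degree polynomial f, and let (A',B') be a depth-2 linear circuit over ℚ for D^{⊗n'} with left degree polynomial f', where n, n' ≥ 1. Then (A ⊗ A', B ⊗ B') is a depth-2 linear circuit for D^{⊗(n+n')} (under the identification of the index set {0,1}^n × {0,1}^{n'} with {0,1}^{n+n'} by concatenation), and its left degree polynomial f'' satisfies (n+n')·f''(p) = n·f(p) + n'·f'(p) for every p ∈ [0,1]. -/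
/-!
Every row of a circuit `A` for `D^{⊗n}` is nonzero, since column `0` of `D^{⊗n}` is all ones.
Row `(x, x')` of `A ⊗ A'` has `L(x) · L'(x')` nonzero entries, so its `log₂` is
`log₂ L(x) + log₂ L'(x')`. The weight `p^{|x|+|x'|} (1-p)^{n+n'-|x|-|x'|}` is the product of the
Bernoulli(`p`) product weights `bitWeight p x` and `bitWeight p x'`, each summing to `1`, so the
expectation of the sum splits into the two expectations `n f(p)` and `n' f'(p)`.
-/

open Matrix

/-- The 2×2 disjointness matrix over ℚ. -/
def Dmat : Matrix (Fin 2) (Fin 2) ℚ := !![1, 1; 1, 0]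

/-- The `n`-th Kronecker power of `Dmat`, with rows and columns indexed by
bit strings `Fin n → Fin 2`. -/
def Dpow (n : ℕ) : Matrix (Fin n → Fin 2) (Fin n → Fin 2) ℚ :=
  fun i j => ∏ k, Dmat (i k) (j k)

/-- Hamming weight of a bit string. -/
def hwt {n : ℕ} (i : Fin n → Fin 2) : ℕ := (Finset.univ.filter fun k => i k = 1).card

/-- The left degree polynomial of a depth-2 linear circuit whose first matrix is `A`. -/
noncomputable def leftPoly {n m : ℕ} (A : Matrix (Fin n → Fin 2) (Fin m) ℚ) (p : ℝ) : ℝ :=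
  (1 / (n : ℝ)) * ∑ i : Fin n → Fin 2,
    Real.logb 2 (Nat.card {j : Fin m // A i j ≠ 0}) * p ^ hwt i * (1 - p) ^ (n - hwt i)

/-- The left degree polynomial of the Kronecker product circuit `(A ⊗ A', B ⊗ B')`,
summing over row indices `{0,1}^n × {0,1}^{n'}` identified with `{0,1}^{n+n'}`
by concatenation (so Hamming weights add). -/
noncomputable def kronLeftPoly {n n' m m' : ℕ}
    (kA : Matrix ((Fin n → Fin 2) × (Fin n' → Fin 2)) (Fin m × Fin m') ℚ) (p : ℝ) : ℝ :=
  (1 / ((n : ℝ) + n')) * ∑ x : (Fin n → Fin 2) × (Fin n' → Fin 2),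
    Real.logb 2 (Nat.card {y : Fin m × Fin m' // kA x y ≠ 0})
      * p ^ (hwt x.1 + hwt x.2) * (1 - p) ^ ((n + n') - (hwt x.1 + hwt x.2))

lemma hwt_le {n : ℕ} (i : Fin n → Fin 2) : hwt i ≤ n :=
  (Finset.card_filter_le _ _).trans_eq (Finset.card_fin n)

section BitWeight

variable {R : Type*} [CommRing R]

def bitWeight {n : ℕ} (p : R) (x : Fin n → Fin 2) : R :=
  p ^ hwt x * (1 - p) ^ (n - hwt x)

lemma bitWeight_eq_prod {n : ℕ} (p : R) (x : Fin n → Fin 2) :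
    bitWeight p x = ∏ k, if x k = 1 then p else 1 - p := by
  have hcompl : (Finset.univ.filter fun k => ¬ x k = 1).card = n - hwt x := by
    rw [Finset.filter_not, Finset.card_sdiff_of_subset (Finset.filter_subset _ _),
      Finset.card_univ, Fintype.card_fin, hwt]
  rw [Finset.prod_ite, Finset.prod_const, Finset.prod_const, hcompl, bitWeight, hwt]

lemma sum_bitWeight (n : ℕ) (p : R) : ∑ x : Fin n → Fin 2, bitWeight p x = 1 := by
  simp_rw [bitWeight_eq_prod]
  rw [← Fintype.prod_sum fun (_ : Fin n) (b : Fin 2) => if b = 1 then p else 1 - p]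
  simp

lemma pow_hwt_add_mul_one_sub_pow {n n' : ℕ} (p : R) (x : Fin n → Fin 2)
    (x' : Fin n' → Fin 2) :
    p ^ (hwt x + hwt x') * (1 - p) ^ ((n + n') - (hwt x + hwt x'))
      = bitWeight p x * bitWeight p x' := by
  have hsub : (n + n') - (hwt x + hwt x') = (n - hwt x) + (n' - hwt x') := by
    have := hwt_le x; have := hwt_le x'; omega
  rw [hsub, pow_add, pow_add, bitWeight, bitWeight]
  ring

end BitWeight

lemma Dpow_append {n n' : ℕ} (x y : Fin n → Fin 2) (x' y' : Fin n' → Fin 2) :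
    Dpow (n + n') (Fin.append x x') (Fin.append y y') = Dpow n x y * Dpow n' x' y' := by
  simp only [Dpow, Fin.prod_univ_add, Fin.append_left, Fin.append_right]

lemma Dpow_apply_zero (n : ℕ) (i : Fin n → Fin 2) : Dpow n i 0 = 1 := by
  have hcol : ∀ a : Fin 2, Dmat a 0 = 1 := by decide
  simp [Dpow, hcol]

lemma Matrix.exists_ne_zero_of_mul_apply_ne_zero {ι κ ν R : Type*} [Fintype κ]
    [NonUnitalNonAssocSemiring R] {A : Matrix ι κ R} {B : Matrix κ ν R} {i : ι} {j : ν}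
    (h : (A * B) i j ≠ 0) : ∃ k, A i k ≠ 0 := by
  contrapose! h
  simp [Matrix.mul_apply, h]

lemma card_row_support_pos_of_mul_eq_Dpow {n m : ℕ} {A : Matrix (Fin n → Fin 2) (Fin m) ℚ}
    {B : Matrix (Fin m) (Fin n → Fin 2) ℚ} (hAB : A * B = Dpow n) (i : Fin n → Fin 2) :
    0 < Nat.card {j : Fin m // A i j ≠ 0} := by
  have hij : (A * B) i 0 ≠ 0 := by simp [hAB, Dpow_apply_zero]
  obtain ⟨j, hj⟩ := Matrix.exists_ne_zero_of_mul_apply_ne_zero hij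
  exact Nat.card_pos_iff.2 ⟨⟨⟨j, hj⟩⟩, inferInstance⟩

lemma Matrix.card_kroneckerMap_row_support {ι ι' κ κ' R : Type*} [MulZeroClass R]
    [NoZeroDivisors R] (A : Matrix ι κ R) (A' : Matrix ι' κ' R) (i : ι) (i' : ι') :
    Nat.card {k : κ × κ' // kroneckerMap (· * ·) A A' (i, i') k ≠ 0}
      = Nat.card {k : κ // A i k ≠ 0} * Nat.card {k' : κ' // A' i' k' ≠ 0} := by
  rw [← Nat.card_prod]
  refine Nat.card_congr ((Equiv.subtypeEquivRight fun k => ?_).trans Equiv.subtypeProdEquivProd)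
  simp [kroneckerMap_apply]

lemma Fintype.sum_prod_add_mul_mul {α β R : Type*} [Fintype α] [Fintype β] [CommSemiring R]
    (a s : α → R) (b t : β → R) (hs : ∑ i, s i = 1) (ht : ∑ j, t j = 1) :
    ∑ x : α × β, (a x.1 + b x.2) * (s x.1 * t x.2) = ∑ i, a i * s i + ∑ j, b j * t j := by
  calc ∑ x : α × β, (a x.1 + b x.2) * (s x.1 * t x.2)
      = (∑ i, a i * s i) * ∑ j, t j + (∑ i, s i) * ∑ j, b j * t j := by
        rw [Fintype.sum_mul_sum, Fintype.sum_mul_sum, ← Finset.sum_add_distrib,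
          Fintype.sum_prod_type]
        refine Finset.sum_congr rfl fun i _ => ?_
        rw [← Finset.sum_add_distrib]
        exact Finset.sum_congr rfl fun j _ => by ring
    _ = ∑ i, a i * s i + ∑ j, b j * t j := by rw [hs, ht, mul_one, one_mul]

lemma natCast_mul_leftPoly {n m : ℕ} (hn : n ≠ 0) (A : Matrix (Fin n → Fin 2) (Fin m) ℚ)
    (p : ℝ) :
    (n : ℝ) * leftPoly A p
      = ∑ i, Real.logb 2 (Nat.card {j : Fin m // A i j ≠ 0}) * bitWeight p i := by
  have hn' : (n : ℝ) ≠ 0 := by exact_mod_cast hn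
  simp_rw [leftPoly, ← mul_assoc, mul_one_div_cancel hn', one_mul, mul_assoc, bitWeight]

lemma add_mul_kronLeftPoly {n n' m m' : ℕ} (h : n + n' ≠ 0)
    (kA : Matrix ((Fin n → Fin 2) × (Fin n' → Fin 2)) (Fin m × Fin m') ℚ) (p : ℝ) :
    ((n : ℝ) + n') * kronLeftPoly kA p
      = ∑ x, Real.logb 2 (Nat.card {k : Fin m × Fin m' // kA x k ≠ 0})
          * (bitWeight p x.1 * bitWeight p x.2) := by
  have h' : (n : ℝ) + n' ≠ 0 := by exact_mod_cast h
  simp_rw [kronLeftPoly, ← mul_assoc, mul_one_div_cancel h', one_mul, mul_assoc,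
    pow_hwt_add_mul_one_sub_pow]

/-- Tensoring two circuits for `D^{⊗n}` and `D^{⊗n'}` yields a circuit for `D^{⊗(n+n')}`
(under the concatenation identification), whose left degree polynomial `f''` satisfies
`(n+n') f''(p) = n f(p) + n' f'(p)` on `[0,1]`. -/
theorem kronecker_circuit_left_poly {n n' m m' : ℕ} (hn : 1 ≤ n) (hn' : 1 ≤ n')
    (A : Matrix (Fin n → Fin 2) (Fin m) ℚ) (B : Matrix (Fin m) (Fin n → Fin 2) ℚ)
    (A' : Matrix (Fin n' → Fin 2) (Fin m') ℚ) (B' : Matrix (Fin m') (Fin n' → Fin 2) ℚ)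
    (hAB : A * B = Dpow n) (hAB' : A' * B' = Dpow n') :
    (∀ x y : (Fin n → Fin 2) × (Fin n' → Fin 2),
      (Matrix.kroneckerMap (· * ·) A A' * Matrix.kroneckerMap (· * ·) B B') x y
        = Dpow (n + n') (Fin.append x.1 x.2) (Fin.append y.1 y.2)) ∧
    (∀ p ∈ Set.Icc (0 : ℝ) 1,
      ((n : ℝ) + n') * kronLeftPoly (Matrix.kroneckerMap (· * ·) A A') p
        = (n : ℝ) * leftPoly A p + (n' : ℝ) * leftPoly A' p) := by
  refine ⟨fun x y => ?_, fun p _ => ?_⟩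
  · rw [← Matrix.mul_kronecker_mul, hAB, hAB', Dpow_append]
    rfl
  · have hlog : ∀ x : (Fin n → Fin 2) × (Fin n' → Fin 2),
        Real.logb 2 (Nat.card {k // kroneckerMap (· * ·) A A' x k ≠ 0})
          = Real.logb 2 (Nat.card {j // A x.1 j ≠ 0})
            + Real.logb 2 (Nat.card {j // A' x.2 j ≠ 0}) := fun x => by
      rw [Matrix.card_kroneckerMap_row_support, Nat.cast_mul, Real.logb_mul
        (Nat.cast_ne_zero.2 (card_row_support_pos_of_mul_eq_Dpow hAB x.1).ne')
        (Nat.cast_ne_zero.2 (card_row_support_pos_of_mul_eq_Dpow hAB' x.2).ne')]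
    rw [add_mul_kronLeftPoly (by omega), natCast_mul_leftPoly (by omega),
      natCast_mul_leftPoly (by omega)]
    simp_rw [hlog]
    exact Fintype.sum_prod_add_mul_mul (fun i => Real.logb 2 (Nat.card {j // A i j ≠ 0})) _
      (fun i => Real.logb 2 (Nat.card {j // A' i j ≠ 0})) _
      (sum_bitWeight n p) (sum_bitWeight n' p)
end

section
/- Let n ≥ 1 and let a : {0,1}^n → ℝ satisfy 0 ≤ a(i) ≤ M for all i ∈ {0,1}^n, for some constant M ≥ 0. Then the function f : [0,1] → ℝ defined by f(p) = (1/n) Σ_{i∈{0,1}^n} a(i) · p^{‖i‖₁}(1−p)^{n−‖i‖₁} is M-Lipschitz on [0,1], i.e., |f(p) − f(p')| ≤ M·|p − p'| for all p, p' ∈ [0,1]. -/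
open Finset

lemma prod_ite_eq_one_eq_pow_hwt {R : Type*} [CommMonoid R] {n : ℕ} (i : Fin n → Fin 2) (x y : R) :
    ∏ k, (if i k = 1 then x else y) = x ^ hwt i * y ^ (n - hwt i) := by
  have hcard : (univ.filter fun k => ¬i k = 1).card = n - hwt i := by
    have := card_filter_add_card_filter_not (s := univ) (fun k => i k = 1)
    rw [card_univ, Fintype.card_fin] at this
    unfold hwt
    omega
  rw [prod_ite, prod_const, prod_const, hcard]
  rfl

theorem sum_pow_hwt_mul_pow_sub_hwt {R : Type*} [CommSemiring R] (n : ℕ) (x y : R) :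
    ∑ i : Fin n → Fin 2, x ^ hwt i * y ^ (n - hwt i) = (x + y) ^ n := by
  simp_rw [← prod_ite_eq_one_eq_pow_hwt]
  rw [← Fintype.prod_sum (fun _ b => if b = 1 then x else y)]
  simp [Fin.sum_univ_two, add_comm]

theorem sum_hwt_mul_pow_mul_pow_sub_hwt (n : ℕ) (x y : ℝ) :
    ∑ i : Fin n → Fin 2, (hwt i : ℝ) * x ^ (hwt i - 1) * y ^ (n - hwt i)
      = n * (x + y) ^ (n - 1) := by
  have hsum : HasDerivAt (fun t : ℝ => ∑ i : Fin n → Fin 2, t ^ hwt i * y ^ (n - hwt i))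
      (∑ i : Fin n → Fin 2, (hwt i : ℝ) * x ^ (hwt i - 1) * y ^ (n - hwt i)) x :=
    .fun_sum fun i _ => (hasDerivAt_pow (hwt i) x).mul_const _
  have hpow : HasDerivAt (fun t : ℝ => (t + y) ^ n) (n * (x + y) ^ (n - 1)) x := by
    simpa using ((hasDerivAt_id' x).add_const y).fun_pow n
  simp_rw [sum_pow_hwt_mul_pow_sub_hwt] at hsum
  exact hsum.unique hpow

theorem sum_pow_hwt_mul_sub_hwt_mul_pow (n : ℕ) (x y : ℝ) :
    ∑ i : Fin n → Fin 2, x ^ hwt i * ((n - hwt i : ℕ) * y ^ (n - hwt i - 1))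
      = n * (x + y) ^ (n - 1) := by
  have hsum : HasDerivAt (fun t : ℝ => ∑ i : Fin n → Fin 2, x ^ hwt i * t ^ (n - hwt i))
      (∑ i : Fin n → Fin 2, x ^ hwt i * ((n - hwt i : ℕ) * y ^ (n - hwt i - 1))) y :=
    .fun_sum fun i _ => (hasDerivAt_pow (n - hwt i) y).const_mul _
  have hpow : HasDerivAt (fun t : ℝ => (x + t) ^ n) (n * (x + y) ^ (n - 1)) y := by
    simpa using ((hasDerivAt_id' y).const_add x).fun_pow n
  simp_rw [sum_pow_hwt_mul_pow_sub_hwt] at hsum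
  exact hsum.unique hpow

lemma hasDerivAt_pow_mul_one_sub_pow (k m : ℕ) (q : ℝ) :
    HasDerivAt (fun t : ℝ => t ^ k * (1 - t) ^ m)
      (k * q ^ (k - 1) * (1 - q) ^ m - q ^ k * (m * (1 - q) ^ (m - 1))) q := by
  have h1q : HasDerivAt (fun t : ℝ => (1 - t) ^ m) (-(m * (1 - q) ^ (m - 1))) q := by
    simpa using ((hasDerivAt_id' q).const_sub 1).fun_pow m
  rw [sub_eq_add_neg, ← mul_neg]
  exact (hasDerivAt_pow k q).mul h1q

theorem abs_sum_mul_sub_le {ι : Type*} (s : Finset ι) {a u v : ι → ℝ} {M C : ℝ}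
    (ha : ∀ i ∈ s, 0 ≤ a i ∧ a i ≤ M) (hu : ∀ i ∈ s, 0 ≤ u i) (hv : ∀ i ∈ s, 0 ≤ v i)
    (hU : ∑ i ∈ s, u i = C) (hV : ∑ i ∈ s, v i = C) :
    |∑ i ∈ s, a i * (u i - v i)| ≤ M * C := by
  have upper : ∀ w : ι → ℝ, (∀ i ∈ s, 0 ≤ w i) → ∑ i ∈ s, w i = C →
      0 ≤ ∑ i ∈ s, a i * w i ∧ ∑ i ∈ s, a i * w i ≤ M * C := fun w hw hW =>
    ⟨sum_nonneg fun i hi => mul_nonneg (ha i hi).1 (hw i hi),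
      hW ▸ mul_sum s w M ▸ sum_le_sum fun i hi => mul_le_mul_of_nonneg_right (ha i hi).2 (hw i hi)⟩
  simp_rw [mul_sub, sum_sub_distrib]
  obtain ⟨hu0, huM⟩ := upper u hu hU
  obtain ⟨hv0, hvM⟩ := upper v hv hV
  exact abs_sub_le_iff.2 ⟨by linarith, by linarith⟩

lemma hasDerivAt_sum_mul_pow_hwt_mul_pow {n : ℕ} (a : (Fin n → Fin 2) → ℝ) (q : ℝ) :
    HasDerivAt (fun p : ℝ => ∑ i : Fin n → Fin 2, a i * p ^ hwt i * (1 - p) ^ (n - hwt i))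
      (∑ i : Fin n → Fin 2, a i * (hwt i * q ^ (hwt i - 1) * (1 - q) ^ (n - hwt i)
        - q ^ hwt i * ((n - hwt i : ℕ) * (1 - q) ^ (n - hwt i - 1)))) q :=
  .fun_sum fun i _ => by
    simpa only [mul_assoc] using
      (hasDerivAt_pow_mul_one_sub_pow (hwt i) (n - hwt i) q).const_mul (a i)

theorem abs_sum_mul_deriv_pow_hwt_mul_pow_le {n : ℕ} {M : ℝ} {a : (Fin n → Fin 2) → ℝ}
    (ha : ∀ i, 0 ≤ a i ∧ a i ≤ M) {q : ℝ} (hq : q ∈ Set.Icc (0 : ℝ) 1) :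
    |∑ i : Fin n → Fin 2, a i * (hwt i * q ^ (hwt i - 1) * (1 - q) ^ (n - hwt i)
        - q ^ hwt i * ((n - hwt i : ℕ) * (1 - q) ^ (n - hwt i - 1)))| ≤ M * n := by
  have h0 : 0 ≤ q := hq.1
  have h1 : 0 ≤ 1 - q := sub_nonneg.2 hq.2
  have hsum : n * (q + (1 - q)) ^ (n - 1) = (n : ℝ) := by simp
  exact abs_sum_mul_sub_le univ (fun i _ => ha i) (fun i _ => by positivity)
    (fun i _ => by positivity) ((sum_hwt_mul_pow_mul_pow_sub_hwt n q (1 - q)).trans hsum)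
    ((sum_pow_hwt_mul_sub_hwt_mul_pow n q (1 - q)).trans hsum)

theorem bernoulli_average_lipschitz_general {n : ℕ} (hn : 1 ≤ n) (M : ℝ)
    (a : (Fin n → Fin 2) → ℝ) (ha : ∀ i, 0 ≤ a i ∧ a i ≤ M) :
    ∀ p ∈ Set.Icc (0 : ℝ) 1, ∀ p' ∈ Set.Icc (0 : ℝ) 1,
      |(1 / (n : ℝ)) * ∑ i : Fin n → Fin 2, a i * p ^ hwt i * (1 - p) ^ (n - hwt i)
        - (1 / (n : ℝ)) * ∑ i : Fin n → Fin 2, a i * p' ^ hwt i * (1 - p') ^ (n - hwt i)|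
        ≤ M * |p - p'| := by
  intro p hp p' hp'
  have hn0 : (0 : ℝ) < n := by exact_mod_cast hn
  have hderiv := fun q (_ : q ∈ Set.Icc (0 : ℝ) 1) =>
    ((hasDerivAt_sum_mul_pow_hwt_mul_pow a q).const_mul (1 / (n : ℝ))).hasDerivWithinAt
      (s := Set.Icc 0 1)
  rw [← Real.norm_eq_abs, ← Real.norm_eq_abs]
  refine (convex_Icc 0 1).norm_image_sub_le_of_norm_hasDerivWithin_le hderiv (fun q hq => ?_) hp' hp
  rw [Real.norm_eq_abs, abs_mul, abs_of_pos (by positivity), one_div, inv_mul_le_iff₀ hn0, mul_comm]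
  exact abs_sum_mul_deriv_pow_hwt_mul_pow_le ha hq

/-- If `0 ≤ a(i) ≤ M` for all bit strings `i ∈ {0,1}^n`, then
`f(p) = (1/n) Σ_i a(i) p^{‖i‖₁} (1-p)^{n-‖i‖₁}` is `M`-Lipschitz on `[0,1]`. -/
theorem bernoulli_average_lipschitz {n : ℕ} (hn : 1 ≤ n) (M : ℝ) (hM : 0 ≤ M)
    (a : (Fin n → Fin 2) → ℝ) (ha : ∀ i, 0 ≤ a i ∧ a i ≤ M) :
    ∀ p ∈ Set.Icc (0 : ℝ) 1, ∀ p' ∈ Set.Icc (0 : ℝ) 1,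
      |(1 / (n : ℝ)) * ∑ i : Fin n → Fin 2, a i * p ^ hwt i * (1 - p) ^ (n - hwt i)
        - (1 / (n : ℝ)) * ∑ i : Fin n → Fin 2, a i * p' ^ hwt i * (1 - p') ^ (n - hwt i)|
        ≤ M * |p - p'| :=
  bernoulli_average_lipschitz_general hn M a ha
end
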